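/- arXiv:1011.3432 — 8 statements merged into one kernel-verified Lean document; each statement's English description precedes it below -/
import Mathlib

section
/- If F and G are real 2×2 matrices with det(μF + λG) = 0 for all real μ, λ, then there exist 2×2 real orthogonal matrices Q and Z such that Q F Z and Q G Z are both upper triangular. -/
open Matrix

/-- For any c d, there is an orthogonal Q whose second row is orthogonal to (c,d). -/
lemma aux_orth (c d : ℝ) : ∃ Q : Matrix (Fin 2) (Fin 2) ℝ,
    Qᵀ * Q = 1 ∧ Q 1 0 * c + Q 1 1 * d = 0 := by
  by_cases hcd : c = 0 ∧ d = 0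
  · exact ⟨1, by simp, by simp [hcd.1, hcd.2]⟩
  · have hpos : 0 < c ^ 2 + d ^ 2 := by
      rcases not_and_or.1 hcd with hc | hd
      · positivity
      · positivity
    set n := Real.sqrt (c ^ 2 + d ^ 2) with hn
    have hn2 : n ^ 2 = c ^ 2 + d ^ 2 := Real.sq_sqrt hpos.le
    have hnpos : 0 < n := Real.sqrt_pos.2 hpos
    refine ⟨!![c / n, d / n; -d / n, c / n], ?_, ?_⟩
    · ext i j
      fin_cases i <;> fin_cases j <;>
        simp [Matrix.mul_apply, Fin.sum_univ_two, Matrix.one_apply, Matrix.transpose,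
          Matrix.vecHead, Matrix.vecTail] <;>
        field_simp <;> nlinarith [hn2]
    · simp [Matrix.vecHead, Matrix.vecTail]
      ring

theorem stmt0 (F G : Matrix (Fin 2) (Fin 2) ℝ)
    (h : ∀ μ lam : ℝ, (μ • F + lam • G).det = 0) :
    ∃ Q Z : Matrix (Fin 2) (Fin 2) ℝ,
      Qᵀ * Q = 1 ∧ Zᵀ * Z = 1 ∧ (Q * F * Z) 1 0 = 0 ∧ (Q * G * Z) 1 0 = 0 := by
  have hF : F.det = 0 := by simpa using h 1 0
  obtain ⟨v, hv0, hv⟩ := (Matrix.exists_mulVec_eq_zero_iff).2 hF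
  set a := v 0 with ha
  set b := v 1 with hb
  have hab : a ≠ 0 ∨ b ≠ 0 := by
    by_contra hc
    push_neg at hc
    apply hv0
    ext i
    fin_cases i
    · exact hc.1
    · exact hc.2
  have hpos : 0 < a ^ 2 + b ^ 2 := by
    rcases hab with hc | hc
    · positivity
    · positivity
  set s := Real.sqrt (a ^ 2 + b ^ 2) with hs
  have hs2 : s ^ 2 = a ^ 2 + b ^ 2 := Real.sq_sqrt hpos.le
  have hspos : 0 < s := Real.sqrt_pos.2 hpos
  have hF0 : F 0 0 * a + F 0 1 * b = 0 := by
    have := congrFun hv 0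
    simpa [Matrix.mulVec, dotProduct, Fin.sum_univ_two] using this
  have hF1 : F 1 0 * a + F 1 1 * b = 0 := by
    have := congrFun hv 1
    simpa [Matrix.mulVec, dotProduct, Fin.sum_univ_two] using this
  clear_value a b s
  clear hv hv0 ha hb hs h hF
  obtain ⟨Q, hQ, hQw⟩ := aux_orth (G 0 0 * a + G 0 1 * b) (G 1 0 * a + G 1 1 * b)
  refine ⟨Q, !![a / s, -b / s; b / s, a / s], hQ, ?_, ?_, ?_⟩
  · ext i j
    fin_cases i <;> fin_cases j <;>
      simp [Matrix.mul_apply, Fin.sum_univ_two, Matrix.one_apply, Matrix.transpose,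
        Matrix.vecHead, Matrix.vecTail] <;>
      field_simp <;> nlinarith [hs2]
  · simp only [Matrix.mul_apply, Fin.sum_univ_two]
    simp [Matrix.vecHead, Matrix.vecTail]
    linear_combination (Q 1 0 * hF0 + Q 1 1 * hF1) / s
  · simp only [Matrix.mul_apply, Fin.sum_univ_two]
    simp [Matrix.vecHead, Matrix.vecTail]
    linear_combination hQw / s
end

section
/- Let F be a real 2×2 matrix and G a real 2×2 upper triangular matrix such that det(F + λG) = 0 for some real λ. Then there exist 2×2 real orthogonal matrices Q and Z such that Q F Z and Q G Z are both upper triangular. -/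
/-!
If `(F + λG) z = 0` with `z ≠ 0`, then `Fz = -λ Gz`, so `F` and `G` map `z` into the same line.
Take `Z` orthogonal with first column along `z`, and `Q` orthogonal rotating `Gz` onto the first
axis: the first columns of `QFZ` and `QGZ` are then multiples of `Q Gz`, whose second entry is `0`.
-/

open Matrix

theorem sq_add_sq_pos_of_ne_zero {v : Fin 2 → ℝ} (hv : v ≠ 0) : 0 < v 0 ^ 2 + v 1 ^ 2 := by
  by_contra! h
  refine hv (funext fun i => ?_)
  fin_cases i <;> simp <;> nlinarith [sq_nonneg (v 0), sq_nonneg (v 1)]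

theorem transpose_mul_self_fin_two_rotation (a b : ℝ) :
    !![a, -b; b, a]ᵀ * !![a, -b; b, a] = (a ^ 2 + b ^ 2) • 1 := by
  ext i j; fin_cases i <;> fin_cases j <;> simp [mul_apply, Fin.sum_univ_two] <;> ring

theorem mul_transpose_self_fin_two_rotation (a b : ℝ) :
    !![a, -b; b, a] * !![a, -b; b, a]ᵀ = (a ^ 2 + b ^ 2) • 1 := by
  ext i j; fin_cases i <;> fin_cases j <;> simp [mul_apply, Fin.sum_univ_two] <;> ring

/-- The rotation taking the first basis vector to `v / ‖v‖`; it is `0` when `v = 0`. -/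
noncomputable def rotationTo (v : Fin 2 → ℝ) : Matrix (Fin 2) (Fin 2) ℝ :=
  (√(v 0 ^ 2 + v 1 ^ 2))⁻¹ • !![v 0, -v 1; v 1, v 0]

section rotationTo

variable {v : Fin 2 → ℝ}

theorem rotationTo_transpose_mul_self (hv : v ≠ 0) : (rotationTo v)ᵀ * rotationTo v = 1 := by
  have hr := sq_add_sq_pos_of_ne_zero hv
  rw [rotationTo, transpose_smul, smul_mul_smul_comm, transpose_mul_self_fin_two_rotation,
    smul_smul, ← mul_inv, Real.mul_self_sqrt hr.le, inv_mul_cancel₀ hr.ne', one_smul]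

theorem rotationTo_mul_transpose_self (hv : v ≠ 0) : rotationTo v * (rotationTo v)ᵀ = 1 := by
  have hr := sq_add_sq_pos_of_ne_zero hv
  rw [rotationTo, transpose_smul, smul_mul_smul_comm, mul_transpose_self_fin_two_rotation,
    smul_smul, ← mul_inv, Real.mul_self_sqrt hr.le, inv_mul_cancel₀ hr.ne', one_smul]

theorem mul_rotationTo_apply_zero (A : Matrix (Fin 2) (Fin 2) ℝ) (i : Fin 2) :
    (A * rotationTo v) i 0 = (√(v 0 ^ 2 + v 1 ^ 2))⁻¹ * (A *ᵥ v) i := by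
  simp [rotationTo, mul_apply, mulVec, dotProduct, Fin.sum_univ_two]
  ring

theorem rotationTo_transpose_mulVec_self_one (v : Fin 2 → ℝ) :
    ((rotationTo v)ᵀ *ᵥ v) 1 = 0 := by
  simp [rotationTo, mulVec, dotProduct, Fin.sum_univ_two]
  ring

end rotationTo

theorem exists_orthogonal_mulVec_apply_one_eq_zero (w : Fin 2 → ℝ) :
    ∃ Q : Matrix (Fin 2) (Fin 2) ℝ, Qᵀ * Q = 1 ∧ Q * Qᵀ = 1 ∧ (Q *ᵥ w) 1 = 0 := by
  by_cases hw : w = 0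
  · exact ⟨1, by simp, by simp, by simp [hw]⟩
  · refine ⟨(rotationTo w)ᵀ, ?_, ?_, rotationTo_transpose_mulVec_self_one w⟩
    · rw [transpose_transpose, rotationTo_mul_transpose_self hw]
    · rw [transpose_transpose, rotationTo_transpose_mul_self hw]

theorem stmt1_general (F G : Matrix (Fin 2) (Fin 2) ℝ)
    (h : ∃ lam : ℝ, (F + lam • G).det = 0) :
    ∃ Q Z : Matrix (Fin 2) (Fin 2) ℝ,
      Qᵀ * Q = 1 ∧ Q * Qᵀ = 1 ∧ Zᵀ * Z = 1 ∧ Z * Zᵀ = 1 ∧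
      (Q * F * Z) 1 0 = 0 ∧ (Q * G * Z) 1 0 = 0 := by
  obtain ⟨lam, hdet⟩ := h
  obtain ⟨z, hz, hker⟩ := exists_mulVec_eq_zero_iff.mpr hdet
  have hFz : F *ᵥ z = -lam • (G *ᵥ z) := by
    rw [add_mulVec, smul_mulVec, add_eq_zero_iff_eq_neg] at hker
    rw [hker, neg_smul]
  obtain ⟨Q, hQ₁, hQ₂, hQGz⟩ := exists_orthogonal_mulVec_apply_one_eq_zero (G *ᵥ z)
  refine ⟨Q, rotationTo z, hQ₁, hQ₂, rotationTo_transpose_mul_self hz,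
    rotationTo_mul_transpose_self hz, ?_, ?_⟩
  · rw [mul_rotationTo_apply_zero, ← mulVec_mulVec, hFz, mulVec_smul, Pi.smul_apply, hQGz,
      smul_zero, mul_zero]
  · rw [mul_rotationTo_apply_zero, ← mulVec_mulVec, hQGz, mul_zero]

theorem stmt1 (F G : Matrix (Fin 2) (Fin 2) ℝ) (hG : G 1 0 = 0)
    (h : ∃ lam : ℝ, (F + lam • G).det = 0) :
    ∃ Q Z : Matrix (Fin 2) (Fin 2) ℝ,
      Qᵀ * Q = 1 ∧ Q * Qᵀ = 1 ∧ Zᵀ * Z = 1 ∧ Z * Zᵀ = 1 ∧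
      (Q * F * Z) 1 0 = 0 ∧ (Q * G * Z) 1 0 = 0 :=
  stmt1_general F G h
end

section
/- Let Y ∈ ℝ^{I×I×2} have slices Y₁, Y₂ such that det(μY₁ + λY₂) = 0 for all real μ, λ. Then Y admits a full Generalized Schur Decomposition: there exist orthogonal I×I matrices Q_a, Q_b and upper triangular I×I matrices R₁, R₂ such that Y_k = Q_a R_k Q_bᵀ for k = 1, 2. -/
/-!
Induct on the size. Evaluating at `(μ, λ) = (0, 1)` shows that `Y₁` is singular.

* If some `v ∈ ker Y₁` has `Y₀ v ≠ 0`, choose orthogonal `Q`, `P` whose first columns are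
  proportional to `v` and `Y₀ v`. Then `A_k = Pᵀ Y_k Q` has first column `(c_k, 0, …, 0)` with
  `c₀ ≠ 0 = c₁`, so `0 = det (μ A₀ + λ A₁) = μ c₀ det (μ A₀' + λ A₁')` for the trailing blocks
  `A_k'`: the deflated pencil is singular for `μ ≠ 0`, hence for all `μ` by continuity.
* If some left null vector of `Y₁` is not left null for `Y₀`, apply the first case to the
  transposed pencil and reverse the order of the indices.
* Otherwise `Y₀, Y₁` have a common right null vector `v` and a common left null vector `w`.
  Taking `v` as first column of `Q` and `w` as last column of `P`, the matrices `Pᵀ Y_k Q` have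
  vanishing first column and last row, so the deflated pencil has a zero row.

In each case the deflated pencil has a generalized Schur decomposition by induction, and bordering
its orthogonal factors by `diag (1, ·)` gives one for `Y`.
-/

open Matrix

namespace Matrix

variable {R : Type*}

section BlockDiagOne

variable {n : ℕ}

def blockDiagOne [Zero R] [One R] (B : Matrix (Fin n) (Fin n) R) :
    Matrix (Fin (n + 1)) (Fin (n + 1)) R :=
  of fun i j => Fin.cases (Fin.cases 1 0 j) (fun i' => Fin.cases 0 (B i') j) i

section
variable [Zero R] [One R] (B : Matrix (Fin n) (Fin n) R)

@[simp] theorem blockDiagOne_zero_zero : blockDiagOne B 0 0 = 1 := rfl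
@[simp] theorem blockDiagOne_zero_succ (j : Fin n) : blockDiagOne B 0 j.succ = 0 := rfl
@[simp] theorem blockDiagOne_succ_zero (i : Fin n) : blockDiagOne B i.succ 0 = 0 := rfl
@[simp] theorem blockDiagOne_succ_succ (i j : Fin n) : blockDiagOne B i.succ j.succ = B i j := rfl

theorem blockDiagOne_transpose : (blockDiagOne B)ᵀ = blockDiagOne Bᵀ := by
  ext i j
  cases i using Fin.cases <;> cases j using Fin.cases <;> rfl

theorem blockDiagOne_one : blockDiagOne (1 : Matrix (Fin n) (Fin n) R) = 1 := by
  ext i j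
  cases i using Fin.cases <;> cases j using Fin.cases <;>
    simp [one_apply, (Fin.succ_ne_zero _).symm]

end

theorem blockDiagOne_mul [NonAssocSemiring R] (B C : Matrix (Fin n) (Fin n) R) :
    blockDiagOne B * blockDiagOne C = blockDiagOne (B * C) := by
  ext i j
  cases i using Fin.cases <;> cases j using Fin.cases <;> simp [mul_apply, Fin.sum_univ_succ]

theorem blockDiagOne_mem_orthogonalGroup [CommRing R] {B : Matrix (Fin n) (Fin n) R}
    (hB : B ∈ orthogonalGroup (Fin n) R) : blockDiagOne B ∈ orthogonalGroup (Fin (n + 1)) R := by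
  rw [mem_orthogonalGroup_iff'] at hB ⊢
  rw [blockDiagOne_transpose, blockDiagOne_mul, hB, blockDiagOne_one]

variable [CommSemiring R] (A : Matrix (Fin (n + 1)) (Fin (n + 1)) R)
  (P Q : Matrix (Fin n) (Fin n) R)

theorem transpose_blockDiagOne_mul_mul_blockDiagOne_succ_zero (i : Fin n) :
    ((blockDiagOne P)ᵀ * A * blockDiagOne Q) i.succ 0 = ∑ j, P j i * A j.succ 0 := by
  simp [mul_apply, Fin.sum_univ_succ]

theorem submatrix_succ_transpose_blockDiagOne_mul_mul_blockDiagOne :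
    ((blockDiagOne P)ᵀ * A * blockDiagOne Q).submatrix Fin.succ Fin.succ =
      Pᵀ * A.submatrix Fin.succ Fin.succ * Q := by
  ext i j
  simp [mul_apply, Fin.sum_univ_succ]

end BlockDiagOne

theorem blockTriangular_id_of_succ [Zero R] {n : ℕ} {M : Matrix (Fin (n + 1)) (Fin (n + 1)) R}
    (h0 : ∀ i : Fin n, M i.succ 0 = 0)
    (hsucc : (M.submatrix Fin.succ Fin.succ).BlockTriangular id) :
    M.BlockTriangular id := by
  intro i j hji
  cases i using Fin.cases with
  | zero => exact absurd hji (Fin.not_lt_zero j)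
  | succ i =>
    cases j using Fin.cases with
    | zero => exact h0 i
    | succ j => exact hsucc (Fin.succ_lt_succ_iff.mp hji)

theorem det_eq_mul_det_submatrix_succ [CommRing R] {n : ℕ}
    {A : Matrix (Fin (n + 1)) (Fin (n + 1)) R} (h : ∀ i : Fin n, A i.succ 0 = 0) :
    A.det = A 0 0 * (A.submatrix Fin.succ Fin.succ).det := by
  simp [det_succ_column_zero A, Fin.sum_univ_succ, h]

section Columns

variable [CommSemiring R] {m n : Type*} [Fintype n]

theorem mul_apply_of_col_eq_smul {N : Matrix m n R} {Q : Matrix n n R} {j : n} {a : R}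
    {v : n → R} (hQ : ∀ l, Q l j = a * v l) (i : m) : (N * Q) i j = a * (N *ᵥ v) i := by
  simp only [mul_apply, mulVec, dotProduct, hQ, Finset.mul_sum]
  exact Finset.sum_congr rfl fun _ _ => by ring

theorem transpose_mul_apply_of_col_eq_smul {N : Matrix n m R} {P : Matrix n n R} {i : n} {b : R}
    {w : n → R} (hP : ∀ l, P l i = b * w l) (j : m) : (Pᵀ * N) i j = b * (w ᵥ* N) j := by
  simp only [mul_apply, vecMul, dotProduct, transpose_apply, hP, Finset.mul_sum]
  exact Finset.sum_congr rfl fun _ _ => by ring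

end Columns

section Orthogonal

variable {n : Type*} [Fintype n] [DecidableEq n]

theorem transpose_mulVec_of_col_eq_smul [Field R] {P : Matrix n n R}
    (hP : P ∈ orthogonalGroup n R) {j : n} {b : R} (hb : b ≠ 0) {u : n → R}
    (hPu : ∀ l, P l j = b * u l) : Pᵀ *ᵥ u = b⁻¹ • Pi.single j 1 := by
  have hu : u = b⁻¹ • (P *ᵥ Pi.single j 1) := by
    ext l
    simp [hPu, hb]
  rw [hu, mulVec_smul, mulVec_mulVec, (mem_orthogonalGroup_iff' _ _).mp hP, one_mulVec]

theorem submatrix_id_mem_orthogonalGroup [CommRing R] {Q : Matrix n n R}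
    (hQ : Q ∈ orthogonalGroup n R) (e : Equiv.Perm n) : Q.submatrix id e ∈ orthogonalGroup n R := by
  rw [mem_orthogonalGroup_iff'] at hQ ⊢
  rw [transpose_submatrix, ← submatrix_mul _ _ _ _ _ Function.bijective_id, hQ,
    submatrix_one_equiv]

theorem exists_mem_orthogonalGroup_col_eq_smul {w : n → ℝ} (hw : w ≠ 0) (j : n) :
    ∃ P ∈ orthogonalGroup n ℝ, ∃ c ≠ (0 : ℝ), ∀ i, P i j = c * w i := by
  set x : EuclideanSpace ℝ n := WithLp.toLp 2 w
  have hx : x ≠ 0 := by simpa [x] using hw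
  have hunit : Orthonormal ℝ (({j} : Set n).domRestrict fun _ => ‖x‖⁻¹ • x) := by
    rw [orthonormal_subsingleton_iff]
    intro i
    rw [Set.domRestrict_apply, norm_smul, norm_inv, norm_norm,
      inv_mul_cancel₀ (norm_ne_zero_iff.mpr hx)]
  obtain ⟨b, hb⟩ := hunit.exists_orthonormalBasis_extension_of_card_eq (by simp)
  refine ⟨(EuclideanSpace.basisFun n ℝ).toBasis.toMatrix b,
    (EuclideanSpace.basisFun n ℝ).toMatrix_orthonormalBasis_mem_orthogonal b, ‖x‖⁻¹,
    by simpa using hx, fun i => ?_⟩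
  rw [Module.Basis.toMatrix_apply, OrthonormalBasis.coe_toBasis_repr_apply, hb j rfl]
  simp [x]

end Orthogonal

end Matrix

def IsSingularPencil {R n : Type*} [CommRing R] [Fintype n] [DecidableEq n]
    (A B : Matrix n n R) : Prop :=
  ∀ μ lam : R, (μ • A + lam • B).det = 0

namespace IsSingularPencil

section
variable {R n : Type*} [CommRing R] [Fintype n] [DecidableEq n] {A B : Matrix n n R}

theorem det_right_eq_zero (h : IsSingularPencil A B) : B.det = 0 := by
  simpa using h 0 1

theorem transpose (h : IsSingularPencil A B) : IsSingularPencil Aᵀ Bᵀ := by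
  intro μ lam
  rw [← transpose_smul, ← transpose_smul, ← transpose_add, det_transpose]
  exact h μ lam

theorem mul_mul (h : IsSingularPencil A B) (P Q : Matrix n n R) :
    IsSingularPencil (P * A * Q) (P * B * Q) := by
  intro μ lam
  have hpencil : μ • (P * A * Q) + lam • (P * B * Q) = P * (μ • A + lam • B) * Q := by
    simp only [Matrix.mul_add, Matrix.add_mul, Matrix.mul_smul, Matrix.smul_mul]
  rw [hpencil, det_mul, det_mul, h μ lam, mul_zero, zero_mul]

theorem of_row_eq_zero (i : n) (hA : ∀ j, A i j = 0) (hB : ∀ j, B i j = 0) :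
    IsSingularPencil A B :=
  fun μ lam => det_eq_zero_of_row_eq_zero i fun j => by simp [hA, hB]

end

theorem submatrix_succ {n : ℕ} {A B : Matrix (Fin (n + 1)) (Fin (n + 1)) ℝ}
    (h : IsSingularPencil A B) (hA : ∀ i : Fin n, A i.succ 0 = 0)
    (hB : ∀ i : Fin n, B i.succ 0 = 0) (hA0 : A 0 0 ≠ 0) (hB0 : B 0 0 = 0) :
    IsSingularPencil (A.submatrix Fin.succ Fin.succ) (B.submatrix Fin.succ Fin.succ) := by
  intro μ lam
  have hne : ∀ μ ∈ ({0}ᶜ : Set ℝ),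
      (μ • A.submatrix Fin.succ Fin.succ + lam • B.submatrix Fin.succ Fin.succ).det = 0 := by
    intro μ hμ
    have hdet := h μ lam
    rw [det_eq_mul_det_submatrix_succ fun i => by simp [hA, hB], submatrix_add, submatrix_smul,
      submatrix_smul] at hdet
    simpa [hB0, hA0, Set.mem_compl_singleton_iff.mp hμ] using hdet
  have hcont : Continuous fun μ : ℝ =>
      (μ • A.submatrix Fin.succ Fin.succ + lam • B.submatrix Fin.succ Fin.succ).det := by
    fun_prop
  exact congrFun (hcont.ext_on (dense_compl_singleton 0) continuous_const hne) μ

end IsSingularPencil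

/-- The triangular factors of the decomposition are `Pᵀ * Y k * Q`; `BlockTriangular id` is
upper triangularity. -/
def HasGSD {R κ : Type*} [CommRing R] {n : ℕ} (Y : κ → Matrix (Fin n) (Fin n) R) : Prop :=
  ∃ P ∈ orthogonalGroup (Fin n) R, ∃ Q ∈ orthogonalGroup (Fin n) R,
    ∀ k, (Pᵀ * Y k * Q).BlockTriangular id

namespace HasGSD

variable {R κ : Type*} [CommRing R] {n : ℕ}

theorem of_le_one (hn : n ≤ 1) (Y : κ → Matrix (Fin n) (Fin n) R) : HasGSD Y :=
  ⟨1, one_mem _, 1, one_mem _, fun _ i j hji => absurd hji (by omega)⟩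

theorem of_deflation {Y : κ → Matrix (Fin (n + 1)) (Fin (n + 1)) R}
    {P Q : Matrix (Fin (n + 1)) (Fin (n + 1)) R} (hP : P ∈ orthogonalGroup _ R)
    (hQ : Q ∈ orthogonalGroup _ R) (hcol : ∀ k (i : Fin n), (Pᵀ * Y k * Q) i.succ 0 = 0)
    (hZ : HasGSD fun k => (Pᵀ * Y k * Q).submatrix Fin.succ Fin.succ) : HasGSD Y := by
  obtain ⟨P', hP', Q', hQ', htri⟩ := hZ
  refine ⟨P * blockDiagOne P', mul_mem hP (blockDiagOne_mem_orthogonalGroup hP'),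
    Q * blockDiagOne Q', mul_mem hQ (blockDiagOne_mem_orthogonalGroup hQ'), fun k => ?_⟩
  have hconj : (P * blockDiagOne P')ᵀ * Y k * (Q * blockDiagOne Q') =
      (blockDiagOne P')ᵀ * (Pᵀ * Y k * Q) * blockDiagOne Q' := by
    simp only [transpose_mul, Matrix.mul_assoc]
  rw [hconj]
  refine blockTriangular_id_of_succ (fun i => ?_) ?_
  · simp [transpose_blockDiagOne_mul_mul_blockDiagOne_succ_zero, hcol]
  · rw [submatrix_succ_transpose_blockDiagOne_mul_mul_blockDiagOne]
    exact htri k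

theorem of_transpose {Y : κ → Matrix (Fin n) (Fin n) R} (h : HasGSD fun k => (Y k)ᵀ) :
    HasGSD Y := by
  obtain ⟨P, hP, Q, hQ, htri⟩ := h
  refine ⟨Q.submatrix id Fin.revPerm, submatrix_id_mem_orthogonalGroup hQ _,
    P.submatrix id Fin.revPerm, submatrix_id_mem_orthogonalGroup hP _, fun k i j hji => ?_⟩
  have hrev : (Q.submatrix id Fin.revPerm)ᵀ * Y k * P.submatrix id Fin.revPerm =
      (Pᵀ * (Y k)ᵀ * Q)ᵀ.submatrix Fin.revPerm Fin.revPerm := by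
    rw [transpose_submatrix, ← submatrix_id_id (Y k),
      ← submatrix_mul _ _ _ _ _ Function.bijective_id,
      ← submatrix_mul _ _ _ _ _ Function.bijective_id]
    simp only [transpose_mul, transpose_transpose, submatrix_id_id, Matrix.mul_assoc]
  rw [hrev]
  exact htri k (Fin.rev_lt_rev.mpr hji)

end HasGSD

theorem hasGSD_of_mulVec_eq_zero_of_mulVec_ne_zero {n : ℕ}
    (ih : ∀ Z : Fin 2 → Matrix (Fin n) (Fin n) ℝ, IsSingularPencil (Z 0) (Z 1) → HasGSD Z)
    {Y : Fin 2 → Matrix (Fin (n + 1)) (Fin (n + 1)) ℝ} (hY : IsSingularPencil (Y 0) (Y 1))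
    {v : Fin (n + 1) → ℝ} (hv1 : Y 1 *ᵥ v = 0) (hv0 : Y 0 *ᵥ v ≠ 0) : HasGSD Y := by
  have hv : v ≠ 0 := by
    rintro rfl
    exact hv0 (mulVec_zero _)
  obtain ⟨Q, hQ, a, ha, hQv⟩ := exists_mem_orthogonalGroup_col_eq_smul hv 0
  obtain ⟨P, hP, b, hb, hPu⟩ := exists_mem_orthogonalGroup_col_eq_smul hv0 0
  have hcol0 : ∀ i, (Pᵀ * Y 0 * Q) i 0 = a * (b⁻¹ • Pi.single 0 1) i := fun i => by
    rw [mul_apply_of_col_eq_smul hQv, ← mulVec_mulVec, transpose_mulVec_of_col_eq_smul hP hb hPu]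
  have hcol1 : ∀ i, (Pᵀ * Y 1 * Q) i 0 = 0 := fun i => by
    simp [mul_apply_of_col_eq_smul hQv, ← mulVec_mulVec, hv1]
  have hsucc : ∀ k (i : Fin n), (Pᵀ * Y k * Q) i.succ 0 = 0 := by
    simp [Fin.forall_fin_two, hcol0, hcol1]
  refine HasGSD.of_deflation hP hQ hsucc
    (ih _ ((hY.mul_mul Pᵀ Q).submatrix_succ (hsucc 0) (hsucc 1) ?_ (hcol1 0)))
  simp [hcol0, ha, hb]

theorem hasGSD_of_mulVec_eq_zero_of_vecMul_eq_zero {n : ℕ}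
    (ih : ∀ Z : Fin 2 → Matrix (Fin (n + 1)) (Fin (n + 1)) ℝ,
      IsSingularPencil (Z 0) (Z 1) → HasGSD Z)
    {Y : Fin 2 → Matrix (Fin (n + 2)) (Fin (n + 2)) ℝ} {v w : Fin (n + 2) → ℝ} (hv : v ≠ 0)
    (hw : w ≠ 0) (hYv : ∀ k, Y k *ᵥ v = 0) (hwY : ∀ k, w ᵥ* Y k = 0) : HasGSD Y := by
  obtain ⟨Q, hQ, a, -, hQv⟩ := exists_mem_orthogonalGroup_col_eq_smul hv 0
  obtain ⟨P, hP, b, -, hPw⟩ := exists_mem_orthogonalGroup_col_eq_smul hw (Fin.last _)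
  have hcol : ∀ k i, (Pᵀ * Y k * Q) i 0 = 0 := fun k i => by
    simp [mul_apply_of_col_eq_smul hQv, ← mulVec_mulVec, hYv]
  have hrow : ∀ k j, (Pᵀ * Y k * Q) (Fin.last _) j = 0 := fun k j => by
    simp [Matrix.mul_assoc, transpose_mul_apply_of_col_eq_smul hPw, ← vecMul_vecMul, hwY]
  exact HasGSD.of_deflation hP hQ (fun k i => hcol k _)
    (ih _ (.of_row_eq_zero (Fin.last n) (fun j => hrow 0 j.succ) (fun j => hrow 1 j.succ)))

theorem hasGSD_of_isSingularPencil {n : ℕ} {Y : Fin 2 → Matrix (Fin n) (Fin n) ℝ}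
    (hY : IsSingularPencil (Y 0) (Y 1)) : HasGSD Y := by
  induction n with
  | zero => exact HasGSD.of_le_one (by omega) Y
  | succ n ih =>
    rcases n with _ | n
    · exact HasGSD.of_le_one le_rfl Y
    obtain ⟨v, hv, hv1⟩ := exists_mulVec_eq_zero_iff.mpr hY.det_right_eq_zero
    obtain ⟨w, hw, hw1⟩ := exists_vecMul_eq_zero_iff.mpr hY.det_right_eq_zero
    by_cases hv0 : Y 0 *ᵥ v = 0
    · by_cases hw0 : w ᵥ* Y 0 = 0
      · exact hasGSD_of_mulVec_eq_zero_of_vecMul_eq_zero (fun Z hZ => ih hZ) hv hw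
          (Fin.forall_fin_two.mpr ⟨hv0, hv1⟩) (Fin.forall_fin_two.mpr ⟨hw0, hw1⟩)
      · refine HasGSD.of_transpose (hasGSD_of_mulVec_eq_zero_of_mulVec_ne_zero
          (fun Z hZ => ih hZ) hY.transpose (v := w) ?_ ?_) <;> simpa [mulVec_transpose]
    · exact hasGSD_of_mulVec_eq_zero_of_mulVec_ne_zero (fun Z hZ => ih hZ) hY hv1 hv0

theorem stmt3 (I : ℕ) (Y : Fin 2 → Matrix (Fin I) (Fin I) ℝ)
    (h : ∀ μ lam : ℝ, (μ • Y 0 + lam • Y 1).det = 0) :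
    ∃ (Qa Qb : Matrix (Fin I) (Fin I) ℝ) (R : Fin 2 → Matrix (Fin I) (Fin I) ℝ),
      Qaᵀ * Qa = 1 ∧ Qbᵀ * Qb = 1 ∧
      (∀ k, (R k).BlockTriangular id) ∧ (∀ k, Y k = Qa * R k * Qbᵀ) := by
  obtain ⟨P, hP, Q, hQ, htri⟩ := hasGSD_of_isSingularPencil h
  refine ⟨P, Q, fun k => Pᵀ * Y k * Q, (mem_orthogonalGroup_iff' _ _).mp hP,
    (mem_orthogonalGroup_iff' _ _).mp hQ, htri, fun k => ?_⟩
  rw [← Matrix.mul_assoc, ← Matrix.mul_assoc, (mem_orthogonalGroup_iff _ _).mp hP, one_mul,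
    Matrix.mul_assoc, (mem_orthogonalGroup_iff _ _).mp hQ, mul_one]
end

section
/- For every ε > 0 and every pair of real I×I upper triangular matrices R₁, R₂ sharing a common zero diagonal entry, there exist upper triangular matrices H₁, H₂ with ‖R₁ − H₁‖ + ‖R₂ − H₂‖ < ε such that H₁ is nonsingular and H₂H₁⁻¹ has all I eigenvalues real with at least two of them equal. -/
open Matrix Polynomial

noncomputable def frobNorm {I : ℕ} (A : Matrix (Fin I) (Fin I) ℝ) : ℝ :=
  Real.sqrt (∑ i : Fin I, ∑ j : Fin I, (A i j) ^ 2)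

/- Keep the off-diagonal parts and perturb only the diagonals: for `t ≠ 0`, replace the zero
diagonal entries of `R₁` and `R₂` by `t`, and then their entries at the common zero position `i₀` by
`t` times those at some `j₀ ≠ i₀`. The perturbed `H₁` is triangular with nonzero diagonal, hence
invertible, and `H₂ * H₁⁻¹` is triangular with diagonal entries `H₂ k k / H₁ k k`, which agree at
`i₀` and `j₀`. Since `R₁` and `R₂` vanish at `(i₀, i₀)`, the perturbation is continuous in `t` and
equals `(R₁, R₂)` at `t = 0`. -/

namespace Matrix

section Triangular

variable {n : Type*} [Fintype n] [LinearOrder n]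

theorem IsUpperTriangular.diag_mul {R : Type*} [NonUnitalNonAssocSemiring R] {A B : Matrix n n R}
    (hA : A.IsUpperTriangular) (hB : B.IsUpperTriangular) : (A * B).diag = A.diag * B.diag := by
  ext k
  refine (Finset.sum_eq_single k (fun j _ hj => ?_) (by simp)).trans rfl
  change A k j * B j k = 0
  rcases hj.lt_or_gt with h | h
  · rw [hA h, zero_mul]
  · rw [hB h, mul_zero]

variable [DecidableEq n] {K : Type*} [Field K] {A B : Matrix n n K}

theorem IsUpperTriangular.isUnit_det_iff (hA : A.IsUpperTriangular) :
    IsUnit A.det ↔ ∀ k, A k k ≠ 0 := by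
  simp [det_of_isUpperTriangular hA, Finset.prod_ne_zero_iff]

theorem IsUpperTriangular.inv (hA : A.IsUpperTriangular) : A⁻¹.IsUpperTriangular := by
  by_cases hdet : IsUnit A.det
  · have : Invertible A := A.invertibleOfIsUnitDet hdet
    exact blockTriangular_inv_of_blockTriangular hA
  · rw [nonsing_inv_apply_not_isUnit A hdet]
    exact blockTriangular_zero

theorem IsUpperTriangular.diag_inv (hA : A.IsUpperTriangular) (hdet : IsUnit A.det) :
    A⁻¹.diag = A.diag⁻¹ := by
  have h := hA.inv.diag_mul hA
  rw [nonsing_inv_mul A hdet, diag_one] at h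
  exact eq_inv_of_mul_eq_one_left h.symm

theorem IsUpperTriangular.charpoly_mul_inv (hA : A.IsUpperTriangular) (hB : B.IsUpperTriangular)
    (hdet : IsUnit A.det) : (B * A⁻¹).charpoly = ∏ k, (X - C (B k k / A k k)) := by
  have h : (B * A⁻¹).diag = B.diag / A.diag := by
    rw [hB.diag_mul hA.inv, hA.diag_inv hdet, div_eq_mul_inv]
  rw [charpoly_of_isUpperTriangular _ (hB.mul hA.inv)]
  exact Finset.prod_congr rfl fun k _ => congrArg (fun x => X - C x) (congrFun h k)

end Triangular

section ReplaceDiag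

variable {n α : Type*} [DecidableEq n] [AddCommGroup α]

def replaceDiag (R : Matrix n n α) (d : n → α) : Matrix n n α :=
  R + diagonal (d - R.diag)

@[simp]
theorem replaceDiag_apply_self (R : Matrix n n α) (d : n → α) (k : n) :
    R.replaceDiag d k k = d k := by
  simp [replaceDiag]

@[simp]
theorem replaceDiag_diag (R : Matrix n n α) : R.replaceDiag R.diag = R := by
  simp [replaceDiag]

theorem BlockTriangular.replaceDiag {β : Type*} [Preorder β] {R : Matrix n n α} {b : n → β}
    (hR : R.BlockTriangular b) (d : n → α) : (R.replaceDiag d).BlockTriangular b :=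
  hR.add (blockTriangular_diagonal _)

theorem _root_.Continuous.matrix_replaceDiag [TopologicalSpace α] [IsTopologicalAddGroup α]
    {X : Type*} [TopologicalSpace X] (R : Matrix n n α) {d : X → n → α} (hd : Continuous d) :
    Continuous fun x => R.replaceDiag (d x) := by
  unfold replaceDiag
  fun_prop

variable {K : Type*} [Field K] [DecidableEq K]

def perturbDiag (R : Matrix n n K) (i j : n) (t : K) : Matrix n n K :=
  let d : n → K := fun k => if R k k = 0 then t else R k k
  R.replaceDiag (Function.update d i (t * d j))

theorem BlockTriangular.perturbDiag {β : Type*} [Preorder β] {R : Matrix n n K} {b : n → β}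
    (hR : R.BlockTriangular b) (i j : n) (t : K) : (R.perturbDiag i j t).BlockTriangular b :=
  hR.replaceDiag _

theorem perturbDiag_zero {R : Matrix n n K} {i : n} (hi : R i i = 0) (j : n) :
    R.perturbDiag i j 0 = R := by
  have hd : (fun k => if R k k = 0 then 0 else R k k) = R.diag :=
    funext fun k => by by_cases h : R k k = 0 <;> simp [h]
  simp [perturbDiag, hd, (Function.update_eq_self_iff (f := R.diag)).2 hi.symm]

theorem perturbDiag_apply_self_ne_zero (R : Matrix n n K) (i j : n) {t : K} (ht : t ≠ 0) (k : n) :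
    R.perturbDiag i j t k k ≠ 0 := by
  have hd : ∀ k, (if R k k = 0 then t else R k k) ≠ 0 := fun k => by
    by_cases h : R k k = 0 <;> simp [h, ht]
  rcases eq_or_ne k i with rfl | hk
  · simpa [perturbDiag] using mul_ne_zero ht (hd j)
  · simpa [perturbDiag, hk] using hd k

theorem perturbDiag_apply_self_left (R : Matrix n n K) {i j : n} (hij : i ≠ j) (t : K) :
    R.perturbDiag i j t i i = t * R.perturbDiag i j t j j := by
  simp [perturbDiag, hij.symm]

theorem continuous_perturbDiag [TopologicalSpace K] [IsTopologicalRing K] (R : Matrix n n K)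
    (i j : n) : Continuous (R.perturbDiag i j) := by
  have hd : Continuous fun t k => if R k k = 0 then t else R k k := continuous_pi fun k => by
    by_cases h : R k k = 0 <;> simp only [h, if_true, if_false] <;> fun_prop
  exact (hd.update i (continuous_id.mul ((continuous_apply j).comp hd))).matrix_replaceDiag R

end ReplaceDiag

end Matrix

theorem continuous_frobNorm {I : ℕ} : Continuous (frobNorm (I := I)) := by
  unfold frobNorm
  fun_prop

theorem exists_ne_zero_frobNorm_sub_add_lt {I : ℕ} {H₁ H₂ : ℝ → Matrix (Fin I) (Fin I) ℝ}
    (hH₁ : Continuous H₁) (hH₂ : Continuous H₂) {ε : ℝ} (hε : 0 < ε) :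
    ∃ t ≠ 0, frobNorm (H₁ 0 - H₁ t) + frobNorm (H₂ 0 - H₂ t) < ε := by
  have hF : Continuous fun t => frobNorm (H₁ 0 - H₁ t) + frobNorm (H₂ 0 - H₂ t) :=
    (continuous_frobNorm.comp (continuous_const.sub hH₁)).add
      (continuous_frobNorm.comp (continuous_const.sub hH₂))
  have hlim := hF.tendsto' 0 0 (by simp [frobNorm])
  obtain ⟨t, hlt, ht⟩ := ((eventually_nhdsWithin_of_eventually_nhds
    (hlim.eventually (gt_mem_nhds hε))).and (self_mem_nhdsWithin (s := {0}ᶜ))).exists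
  exact ⟨t, ht, hlt⟩

theorem stmt7 (I : ℕ) (hI : 2 ≤ I) (R₁ R₂ : Matrix (Fin I) (Fin I) ℝ)
    (h₁ : R₁.BlockTriangular id) (h₂ : R₂.BlockTriangular id)
    (hzero : ∃ i : Fin I, R₁ i i = 0 ∧ R₂ i i = 0)
    (ε : ℝ) (hε : 0 < ε) :
    ∃ H₁ H₂ : Matrix (Fin I) (Fin I) ℝ,
      H₁.BlockTriangular id ∧ H₂.BlockTriangular id ∧
      frobNorm (R₁ - H₁) + frobNorm (R₂ - H₂) < ε ∧
      IsUnit H₁.det ∧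
      ∃ d : Fin I → ℝ,
        (H₂ * H₁⁻¹).charpoly = ∏ i : Fin I, (X - C (d i)) ∧
        ∃ i j : Fin I, i ≠ j ∧ d i = d j := by
  obtain ⟨i₀, hR₁, hR₂⟩ := hzero
  have : Nontrivial (Fin I) := Fin.nontrivial_iff_two_le.2 hI
  obtain ⟨j₀, hj₀⟩ := exists_ne i₀
  obtain ⟨t, ht, hnorm⟩ := exists_ne_zero_frobNorm_sub_add_lt
    (R₁.continuous_perturbDiag i₀ j₀) (R₂.continuous_perturbDiag i₀ j₀) hε
  rw [perturbDiag_zero hR₁, perturbDiag_zero hR₂] at hnorm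
  set H₁ := R₁.perturbDiag i₀ j₀ t
  set H₂ := R₂.perturbDiag i₀ j₀ t
  have hU₁ : H₁.IsUpperTriangular := h₁.perturbDiag i₀ j₀ t
  have hU₂ : H₂.IsUpperTriangular := h₂.perturbDiag i₀ j₀ t
  have hdet : IsUnit H₁.det := hU₁.isUnit_det_iff.2 (R₁.perturbDiag_apply_self_ne_zero i₀ j₀ ht)
  refine ⟨H₁, H₂, hU₁, hU₂, hnorm, hdet, _, hU₁.charpoly_mul_inv hU₂ hdet, i₀, j₀, hj₀.symm, ?_⟩
  have hi₁ : H₁ i₀ i₀ = t * H₁ j₀ j₀ := R₁.perturbDiag_apply_self_left hj₀.symm t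
  have hi₂ : H₂ i₀ i₀ = t * H₂ j₀ j₀ := R₂.perturbDiag_apply_self_left hj₀.symm t
  rw [hi₁, hi₂]
  exact mul_div_mul_left _ _ ht
end

section
/- Let X₁, X₂ be real I×I matrices with X₁ nonsingular, and suppose X₂X₁⁻¹ has I distinct real eigenvalues. Then the array X with slices X₁, X₂ has outer-product rank at most I, i.e., there exist vectors x_r, y_r ∈ ℝ^I and z_r ∈ ℝ² (r = 1,…,I) such that X = Σ_{r=1}^I x_r ∘ y_r ∘ z_r. -/
open Matrix Polynomial

theorem stmt10 (I : ℕ) (X₁ X₂ : Matrix (Fin I) (Fin I) ℝ)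
    (hX₁ : IsUnit X₁.det)
    (hdist : ∃ d : Fin I → ℝ, Function.Injective d ∧
      (X₂ * X₁⁻¹).charpoly = ∏ i : Fin I, (X - C (d i))) :
    ∃ (x y : Fin I → Fin I → ℝ) (z : Fin I → Fin 2 → ℝ),
      X₁ = ∑ r : Fin I, z r 0 • vecMulVec (x r) (y r) ∧
      X₂ = ∑ r : Fin I, z r 1 • vecMulVec (x r) (y r) := by
  obtain ⟨d, hd, hcp⟩ := hdist
  set A := X₂ * X₁⁻¹ with hA
  -- each d i admits an eigenvector of A
  have hev : ∀ i : Fin I, ∃ v : Fin I → ℝ, v ≠ 0 ∧ A.mulVec v = d i • v := by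
    intro i
    have h1 : A.charpoly.eval (d i) = (d i • (1 : Matrix (Fin I) (Fin I) ℝ) - A).det := by
      rw [Matrix.charpoly, ← Polynomial.coe_evalRingHom, RingHom.map_det]
      congr 1
      ext j k
      by_cases h : j = k <;>
        simp [Matrix.charmatrix_apply, Matrix.map_apply, Matrix.one_apply,
          Matrix.sub_apply, Matrix.smul_apply, h]
    have hdet : (d i • (1 : Matrix (Fin I) (Fin I) ℝ) - A).det = 0 := by
      rw [← h1, hcp, Polynomial.eval_prod]
      exact Finset.prod_eq_zero (Finset.mem_univ i) (by simp)
    obtain ⟨v, hv0, hv⟩ := Matrix.exists_mulVec_eq_zero_iff.2 hdet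
    refine ⟨v, hv0, ?_⟩
    rw [Matrix.sub_mulVec, sub_eq_zero] at hv
    rw [← hv, Matrix.smul_mulVec, Matrix.one_mulVec]
  choose v hv0 hvA using hev
  have hli : LinearIndependent ℝ v := by
    apply Module.End.eigenvectors_linearIndependent' (Matrix.toLin' A) d hd v
    intro i
    refine ⟨?_, hv0 i⟩
    rw [Module.End.mem_eigenspace_iff, Matrix.toLin'_apply, hvA i]
  set P : Matrix (Fin I) (Fin I) ℝ := Matrix.of (fun j i => v i j) with hPdef
  have hPunit : IsUnit P.det := by
    rw [← Matrix.isUnit_iff_isUnit_det]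
    exact Matrix.linearIndependent_cols_iff_isUnit.1 hli
  -- A * P = P * diagonal d
  have hAP : A * P = P * Matrix.diagonal d := by
    ext j k
    have := congrFun (hvA k) j
    simp only [Matrix.mulVec, dotProduct, Pi.smul_apply, smul_eq_mul] at this
    calc (A * P) j k = d k * v k j := by
          simpa [Matrix.mul_apply, hPdef] using this
      _ = (P * Matrix.diagonal d) j k := by
          simp [Matrix.mul_apply, hPdef, Matrix.diagonal_apply, mul_comm]
  set Q : Matrix (Fin I) (Fin I) ℝ := P⁻¹ * X₁ with hQdef
  refine ⟨fun r j => P j r, fun r => Q r, fun r => ![1, d r], ?_, ?_⟩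
  · have h1 : X₁ = P * Q := by
      rw [hQdef, ← Matrix.mul_assoc, Matrix.mul_nonsing_inv _ hPunit, Matrix.one_mul]
    rw [h1]
    ext j k
    simp [Matrix.mul_apply, Matrix.sum_apply, Matrix.vecMulVec_apply]
  · have h2 : X₂ = P * (Matrix.diagonal d * Q) := by
      rw [hQdef, ← Matrix.mul_assoc, ← Matrix.mul_assoc, ← hAP, hA,
        Matrix.mul_nonsing_inv_cancel_right _ _ hPunit,
        Matrix.nonsing_inv_mul_cancel_right _ _ hX₁]
    rw [h2]
    ext j k
    simp [Matrix.mul_apply, Matrix.sum_apply, Matrix.vecMulVec_apply,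
      Matrix.diagonal, Finset.mul_sum, mul_assoc, mul_left_comm]
end

section
/- Let X₁, X₂ be real I×I matrices with X₁ nonsingular, and suppose X₂X₁⁻¹ has a non-real complex eigenvalue. Then the array X with slices X₁, X₂ cannot be written as Σ_{r=1}^I x_r ∘ y_r ∘ z_r with x_r, y_r ∈ ℝ^I, z_r ∈ ℝ², i.e., its real outer-product rank exceeds I. -/
open Matrix Polynomial

private lemma aux_sum_eq {I : ℕ} (x y : Fin I → Fin I → ℝ) (v : Fin I → ℝ) :
    ∑ r : Fin I, v r • vecMulVec (x r) (y r) =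
      ((Matrix.of fun i r => x r i) * Matrix.diagonal v) * (Matrix.of fun r j => y r j) := by
  rw [Matrix.mul_assoc]
  ext i j
  rw [Matrix.mul_apply, Matrix.sum_apply]
  refine Finset.sum_congr rfl fun r _ => ?_
  simp only [Matrix.smul_apply, vecMulVec_apply, Matrix.of_apply, Matrix.diagonal_mul,
    smul_eq_mul]
  ring

private lemma aux_charpoly_conj {n : Type*} [Fintype n] [DecidableEq n]
    {R : Type*} [CommRing R] (P M : Matrix n n R) (hP : IsUnit P.det) :
    (P * M * P⁻¹).charpoly = M.charpoly := by
  have hmap : ∀ N : Matrix n n R, N.map (C : R → R[X]) = (C : R →+* R[X]).mapMatrix N :=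
    fun N => rfl
  have hPQ : (C : R →+* R[X]).mapMatrix P * (C : R →+* R[X]).mapMatrix P⁻¹ = 1 := by
    rw [← _root_.map_mul, Matrix.mul_nonsing_inv P hP, _root_.map_one]
  have key : charmatrix (P * M * P⁻¹) =
      (C : R →+* R[X]).mapMatrix P * charmatrix M * (C : R →+* R[X]).mapMatrix P⁻¹ := by
    rw [charmatrix, charmatrix, Matrix.mul_sub, Matrix.sub_mul]
    congr 1
    · -- scalar part
      have hs : (Matrix.scalar n (X : R[X])) = (X : R[X]) • (1 : Matrix n n R[X]) := by
        rw [Matrix.scalar_apply, Matrix.smul_one_eq_diagonal]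
      symm
      rw [hs, Matrix.mul_smul, mul_one, Matrix.smul_mul, hPQ]
    · symm
      rw [← _root_.map_mul, ← _root_.map_mul]
  rw [Matrix.charpoly, Matrix.charpoly, key, Matrix.det_mul, Matrix.det_mul]
  have hdP : ((C : R →+* R[X]).mapMatrix P).det = C P.det := by
    rw [← RingHom.map_det]
  have hdQ : ((C : R →+* R[X]).mapMatrix P⁻¹).det = C P⁻¹.det := by
    rw [← RingHom.map_det]
  rw [hdP, hdQ, mul_comm (C P.det) (charmatrix M).det, mul_assoc, ← _root_.map_mul,
    Matrix.det_nonsing_inv, Ring.mul_inverse_cancel _ hP, _root_.map_one, mul_one]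

private lemma aux_charpoly_diagonal {n : Type*} [Fintype n] [DecidableEq n]
    {R : Type*} [CommRing R] (d : n → R) :
    (Matrix.diagonal d).charpoly = ∏ i : n, (X - C (d i)) := by
  have : charmatrix (Matrix.diagonal d) = Matrix.diagonal fun i => (X : R[X]) - C (d i) := by
    ext i j
    by_cases h : i = j
    · subst h; simp [charmatrix_apply_eq]
    · simp [charmatrix_apply_ne _ _ _ h, Matrix.diagonal_apply_ne _ h]
  rw [Matrix.charpoly, this, Matrix.det_diagonal]

theorem stmt11 (I : ℕ) (X₁ X₂ : Matrix (Fin I) (Fin I) ℝ)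
    (hX₁ : IsUnit X₁.det)
    (hcpx : ∃ μ : ℂ, μ.im ≠ 0 ∧
      (((X₂ * X₁⁻¹).map (algebraMap ℝ ℂ)).charpoly).IsRoot μ) :
    ¬ ∃ (x y : Fin I → Fin I → ℝ) (z : Fin I → Fin 2 → ℝ),
      X₁ = ∑ r : Fin I, z r 0 • vecMulVec (x r) (y r) ∧
      X₂ = ∑ r : Fin I, z r 1 • vecMulVec (x r) (y r) := by
  rintro ⟨x, y, z, h1, h2⟩
  obtain ⟨μ, hμ, hroot⟩ := hcpx
  set A : Matrix (Fin I) (Fin I) ℝ := Matrix.of fun i r => x r i with hA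
  set B : Matrix (Fin I) (Fin I) ℝ := Matrix.of fun r j => y r j with hB
  have hX1' : X₁ = A * Matrix.diagonal (fun r => z r 0) * B := by
    rw [h1, aux_sum_eq]
  have hX2' : X₂ = A * Matrix.diagonal (fun r => z r 1) * B := by
    rw [h2, aux_sum_eq]
  -- units
  have hdet : IsUnit (A.det * (Matrix.diagonal fun r => z r 0).det * B.det) := by
    rw [← Matrix.det_mul, ← Matrix.det_mul, ← hX1']; exact hX₁
  have hAdet : IsUnit A.det := isUnit_of_mul_isUnit_left (isUnit_of_mul_isUnit_left hdet)
  have hDdet : IsUnit (Matrix.diagonal fun r => z r 0).det :=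
    isUnit_of_mul_isUnit_right (isUnit_of_mul_isUnit_left hdet)
  have hBdet : IsUnit B.det := isUnit_of_mul_isUnit_right hdet
  have hz0 : ∀ r, z r 0 ≠ 0 := by
    intro r hr
    rw [Matrix.det_diagonal] at hDdet
    exact hDdet.ne_zero (Finset.prod_eq_zero (Finset.mem_univ r) hr)
  set d : Fin I → ℝ := fun r => z r 1 / z r 0 with hd
  have hDD : Matrix.diagonal (fun r => z r 1) =
      Matrix.diagonal d * Matrix.diagonal (fun r => z r 0) := by
    rw [Matrix.diagonal_mul_diagonal]
    exact congrArg Matrix.diagonal (funext fun r => (div_mul_cancel₀ _ (hz0 r)).symm)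
  have hconj : X₂ * X₁⁻¹ = A * Matrix.diagonal d * A⁻¹ := by
    rw [hX2', hX1', Matrix.mul_inv_rev, Matrix.mul_inv_rev, hDD,
      ← Matrix.mul_assoc, ← Matrix.mul_assoc, ← Matrix.mul_assoc,
      Matrix.mul_nonsing_inv_cancel_right _ _ hBdet,
      Matrix.mul_nonsing_inv_cancel_right _ _ hDdet]
  have hcp : (X₂ * X₁⁻¹).charpoly = ∏ r : Fin I, (X - C (d r)) := by
    rw [hconj, aux_charpoly_conj A _ hAdet, aux_charpoly_diagonal]
  rw [Matrix.charpoly_map, hcp, Polynomial.map_prod] at hroot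
  simp only [Polynomial.map_sub, Polynomial.map_X, Polynomial.map_C, IsRoot,
    Polynomial.eval_prod, eval_sub, eval_X, eval_C, Finset.prod_eq_zero_iff] at hroot
  obtain ⟨r, -, hr⟩ := hroot
  have : μ = algebraMap ℝ ℂ (d r) := by linear_combination hr
  rw [this] at hμ
  simp at hμ
end

section
/- The set P_R(I,J,2) of arrays in ℝ^{I×J×2} admitting a full GSD of size R (with R ≤ min(I,J)) is closed in ℝ^{I×J×2}. -/
open Matrix

private lemma orth_entry_bound {n R : ℕ} (Q : Matrix (Fin n) (Fin R) ℝ)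
    (h : Qᵀ * Q = 1) (i : Fin n) (j : Fin R) : Q i j ∈ Set.Icc (-1 : ℝ) 1 := by
  have h1 : ∑ l, Q l j * Q l j = 1 := by
    have := congrFun (congrFun h j) j
    simpa [Matrix.mul_apply, Matrix.transpose_apply, Matrix.one_apply] using this
  have h2 : Q i j * Q i j ≤ 1 := by
    rw [← h1]
    exact Finset.single_le_sum (fun l _ => mul_self_nonneg (Q l j)) (Finset.mem_univ i)
  constructor <;> nlinarith

theorem stmt14 (I J R : ℕ) (hR : R ≤ min I J) :
    IsClosed {Y : Fin 2 → Matrix (Fin I) (Fin J) ℝ |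
      ∃ (Qa : Matrix (Fin I) (Fin R) ℝ) (Qb : Matrix (Fin J) (Fin R) ℝ)
        (Rm : Fin 2 → Matrix (Fin R) (Fin R) ℝ),
        Qaᵀ * Qa = 1 ∧ Qbᵀ * Qb = 1 ∧ (∀ k, (Rm k).BlockTriangular id) ∧
        ∀ k, Y k = Qa * Rm k * Qbᵀ} := by
  -- The set of pairs of orthonormal frames
  set K : Set ((Matrix (Fin I) (Fin R) ℝ) × (Matrix (Fin J) (Fin R) ℝ)) :=
    {q | q.1ᵀ * q.1 = 1 ∧ q.2ᵀ * q.2 = 1} with hK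
  have hKclosed : IsClosed K := by
    apply IsClosed.inter
    · exact isClosed_eq ((continuous_fst.matrix_transpose).matrix_mul continuous_fst)
        continuous_const
    · exact isClosed_eq ((continuous_snd.matrix_transpose).matrix_mul continuous_snd)
        continuous_const
  have hKcompact : IsCompact K := by
    have hsub : K ⊆ (Set.univ.pi fun _ : Fin I => Set.univ.pi fun _ : Fin R =>
        Set.Icc (-1 : ℝ) 1) ×ˢ (Set.univ.pi fun _ : Fin J => Set.univ.pi fun _ : Fin R =>
        Set.Icc (-1 : ℝ) 1) := by
      rintro ⟨Qa, Qb⟩ ⟨ha, hb⟩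
      constructor
      · intro i _ j _
        exact orth_entry_bound Qa ha i j
      · intro i _ j _
        exact orth_entry_bound Qb hb i j
    refine IsCompact.of_isClosed_subset (IsCompact.prod ?_ ?_) hKclosed hsub <;>
      exact isCompact_univ_pi fun _ => isCompact_univ_pi fun _ => isCompact_Icc
  haveI : CompactSpace K := isCompact_iff_compactSpace.mp hKcompact
  -- the closed "graph" set
  set T : Set ((Fin 2 → Matrix (Fin I) (Fin J) ℝ) × K) :=
    {p | ∀ k : Fin 2,
        p.1 k = p.2.1.1 * (p.2.1.1ᵀ * p.1 k * p.2.1.2)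
          * p.2.1.2ᵀ ∧
        ∀ i j : Fin R, j < i →
          (p.2.1.1ᵀ * p.1 k * p.2.1.2) i j = 0} with hT
  have cQa : Continuous fun p : (Fin 2 → Matrix (Fin I) (Fin J) ℝ) × K =>
      p.2.1.1 := continuous_fst.comp (continuous_subtype_val.comp continuous_snd)
  have cQb : Continuous fun p : (Fin 2 → Matrix (Fin I) (Fin J) ℝ) × K =>
      p.2.1.2 := continuous_snd.comp (continuous_subtype_val.comp continuous_snd)
  have hTclosed : IsClosed T := by
    rw [hT]
    simp only [Set.setOf_forall, Set.setOf_and]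
    refine isClosed_iInter fun k => IsClosed.inter ?_ ?_
    · have cY : Continuous fun p : (Fin 2 → Matrix (Fin I) (Fin J) ℝ) × K => p.1 k :=
        (continuous_apply k).comp continuous_fst
      exact isClosed_eq cY (((cQa.matrix_mul
        (((cQa.matrix_transpose).matrix_mul cY).matrix_mul cQb))).matrix_mul
        (cQb.matrix_transpose))
    · refine isClosed_iInter fun i => isClosed_iInter fun j => isClosed_iInter fun _ => ?_
      have cY : Continuous fun p : (Fin 2 → Matrix (Fin I) (Fin J) ℝ) × K => p.1 k :=
        (continuous_apply k).comp continuous_fst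
      exact isClosed_eq (((((cQa.matrix_transpose).matrix_mul cY).matrix_mul
        cQb).matrix_elem i j)) continuous_const
  have himg : {Y : Fin 2 → Matrix (Fin I) (Fin J) ℝ |
      ∃ (Qa : Matrix (Fin I) (Fin R) ℝ) (Qb : Matrix (Fin J) (Fin R) ℝ)
        (Rm : Fin 2 → Matrix (Fin R) (Fin R) ℝ),
        Qaᵀ * Qa = 1 ∧ Qbᵀ * Qb = 1 ∧ (∀ k, (Rm k).BlockTriangular id) ∧
        ∀ k, Y k = Qa * Rm k * Qbᵀ} = Prod.fst '' T := by
    ext Y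
    constructor
    · rintro ⟨Qa, Qb, Rm, ha, hb, htri, hY⟩
      refine ⟨(Y, ⟨(Qa, Qb), ha, hb⟩), ?_, rfl⟩
      have key : ∀ k, Qaᵀ * Y k * Qb = Rm k := by
        intro k
        rw [hY k, Matrix.mul_assoc Qa, ← Matrix.mul_assoc Qaᵀ Qa, ha, Matrix.one_mul,
          Matrix.mul_assoc, hb, Matrix.mul_one]
      intro k
      constructor
      · show Y k = Qa * (Qaᵀ * Y k * Qb) * Qbᵀ
        rw [key k, ← hY k]
      · intro i j hij
        show (Qaᵀ * Y k * Qb) i j = 0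
        rw [key k]
        exact htri k hij
    · rintro ⟨⟨Y', q⟩, hmem, rfl⟩
      obtain ⟨⟨Qa, Qb⟩, ha, hb⟩ := q
      refine ⟨Qa, Qb, fun k => Qaᵀ * Y' k * Qb, ha, hb, ?_, ?_⟩
      · intro k i j hij
        exact (hmem k).2 i j hij
      · intro k
        exact (hmem k).1
  rw [himg]
  exact isClosedMap_fst_of_compactSpace T hTclosed
end

section
/- Let Y₁, Y₂ ∈ ℝ^{I×I} with Y₁ nonsingular and suppose A = Y₂Y₁⁻¹ is diagonalizable over ℝ: A = P D P⁻¹ with D diagonal. Then the array Y with slices (Y₁, Y₂) satisfies Y = Σ_{r=1}^I p_r ∘ q_r ∘ z_r, where p_r are the columns of P, q_r are the columns of (P⁻¹Y₁)ᵀ, and z_r = (1, d_r) with d_r the r-th diagonal entry of D. In particular rank∘(Y) ≤ I. -/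
/-! Since `Y₂ Y₁⁻¹ = P D P⁻¹`, both slices factor through the same pair `P`, `P⁻¹ Y₁`:
`Y₁ = P (P⁻¹ Y₁)` and `Y₂ = P D (P⁻¹ Y₁)`. Expanding a matrix product as the sum of
outer products of the columns of the left factor with the rows of the right one gives
the `I` rank-one terms, the diagonal middle factor `D` contributing the weights `d_r`. -/

open Matrix

namespace Matrix

variable {l m n R : Type*} [Fintype m]

theorem mul_eq_sum_vecMulVec [NonUnitalNonAssocSemiring R] (A : Matrix l m R)
    (B : Matrix m n R) :
    A * B = ∑ r, vecMulVec (fun i => A i r) (fun j => B r j) := by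
  ext i j
  simp only [mul_apply, sum_apply, vecMulVec_apply]

theorem mul_diagonal_mul_eq_sum_smul_vecMulVec [DecidableEq m] [CommSemiring R]
    (A : Matrix l m R) (d : m → R) (B : Matrix m n R) :
    A * diagonal d * B = ∑ r, d r • vecMulVec (fun i => A i r) (fun j => B r j) := by
  rw [mul_eq_sum_vecMulVec]
  refine Finset.sum_congr rfl fun r _ => ?_
  ext i j
  simp only [mul_diagonal, vecMulVec_apply, smul_apply, smul_eq_mul]
  ring

end Matrix

theorem stmt19 (I : ℕ) (Y₁ Y₂ : Matrix (Fin I) (Fin I) ℝ)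
    (hY₁ : IsUnit Y₁.det)
    (P D : Matrix (Fin I) (Fin I) ℝ) (hP : IsUnit P.det) (hD : D.IsDiag)
    (hA : Y₂ * Y₁⁻¹ = P * D * P⁻¹) :
    Y₁ = ∑ r : Fin I, vecMulVec (fun i => P i r) (fun j => (P⁻¹ * Y₁) r j) ∧
    Y₂ = ∑ r : Fin I, D r r •
      vecMulVec (fun i => P i r) (fun j => (P⁻¹ * Y₁) r j) := by
  have hY₂ : Y₂ = P * diagonal D.diag * (P⁻¹ * Y₁) :=
    calc Y₂ = Y₂ * Y₁⁻¹ * Y₁ := (nonsing_inv_mul_cancel_right Y₁ Y₂ hY₁).symm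
      _ = P * D * (P⁻¹ * Y₁) := by rw [hA, Matrix.mul_assoc _ P⁻¹]
      _ = P * diagonal D.diag * (P⁻¹ * Y₁) := by rw [hD.diagonal_diag]
  constructor
  · rw [← mul_eq_sum_vecMulVec, mul_nonsing_inv_cancel_left P Y₁ hP]
  · rw [hY₂, mul_diagonal_mul_eq_sum_smul_vecMulVec]
    rfl
end
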